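/- arXiv:2102.00275 — 6 statements merged into one kernel-verified Lean document; each statement's English description precedes it below -/
import Mathlib

section
/- Let (H_b, ω) be a symplectic Hilbert space whose associated operator J (defined by ω(x,y) = ⟨x,Jy⟩) satisfies J² = -I. For every unitary map U : Ker(J - i) → Ker(J + i), the subspace ℓ_U := {x + Ux : x ∈ Ker(J - i)} is a Lagrangian plane of (H_b, ω), i.e. ℓ_U = ℓ_U°. -/
open scoped InnerProductSpace

/-- Let `(H_b, ω)` be a symplectic Hilbert space whose associated
operator `J` (with `ω x y = ⟪x, J y⟫`) satisfies `J² = -I`.  For every unitary map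
(surjective linear isometry) `U : Ker (J - i) → Ker (J + i)`, the subspace
`ℓ_U = {x + U x : x ∈ Ker (J - i)}` is a Lagrangian plane: `ℓ_U = ℓ_U°`. -/
theorem statement3
    {Hb : Type*} [NormedAddCommGroup Hb] [InnerProductSpace ℂ Hb] [CompleteSpace Hb]
    (ω : Hb →L⋆[ℂ] Hb →L[ℂ] ℂ)
    (hnondeg : ∀ x : Hb, (∀ y : Hb, ω x y = 0) → x = 0)
    (hskew : ∀ x y : Hb, ω x y = -(starRingEnd ℂ) (ω y x))
    (J : Hb →L[ℂ] Hb)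
    (hJ : ∀ x y : Hb, ω x y = ⟪x, J y⟫_ℂ)
    (hsq : ∀ x : Hb, J (J x) = -x)
    (Kp Km : Submodule ℂ Hb)
    (hKp : ∀ x : Hb, x ∈ Kp ↔ J x = Complex.I • x)
    (hKm : ∀ x : Hb, x ∈ Km ↔ J x = -(Complex.I • x))
    (U : Kp ≃ₗᵢ[ℂ] Km)
    (ℓ : Set Hb)
    (hℓ : ℓ = {z : Hb | ∃ x : Kp, z = (x : Hb) + ((U x : Km) : Hb)}) :
    ℓ = {z : Hb | ∀ w ∈ ℓ, ω z w = 0} := by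
  -- J is skew-adjoint as a form
  have hJadj : ∀ u v : Hb, ⟪u, J v⟫_ℂ = -(starRingEnd ℂ) ⟪v, J u⟫_ℂ := by
    intro u v; rw [← hJ, ← hJ]; exact hskew u v
  -- Kp and Km are orthogonal
  have horth : ∀ u v : Hb, J u = Complex.I • u → J v = -(Complex.I • v) →
      ⟪u, v⟫_ℂ = 0 := by
    intro u v hu hv
    have h1 : ⟪u, J v⟫_ℂ = -(Complex.I * ⟪u, v⟫_ℂ) := by
      rw [hv, inner_neg_right, inner_smul_right]
    have h2 : ⟪u, J v⟫_ℂ = Complex.I * ⟪u, v⟫_ℂ := by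
      rw [hJadj u v, hu, inner_smul_right, map_mul, ← inner_conj_symm u v]
      simp [Complex.conj_I]
    have h3 : (2 * Complex.I) * ⟪u, v⟫_ℂ = 0 := by
      linear_combination h1 - h2
    have h2i : (2 * Complex.I) ≠ 0 := by simp [Complex.I_ne_zero]
    exact (mul_eq_zero.mp h3).resolve_left h2i
  -- inner products of images under U
  have hUinner : ∀ x y : Kp,
      ⟪((U x : Km) : Hb), ((U y : Km) : Hb)⟫_ℂ = ⟪(x : Hb), (y : Hb)⟫_ℂ := by
    intro x y
    rw [← Submodule.coe_inner, ← Submodule.coe_inner, LinearIsometryEquiv.inner_map_map]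
  -- J on elements of Kp and Km
  have hJp : ∀ x : Kp, J (x : Hb) = Complex.I • (x : Hb) := fun x => (hKp x).mp x.2
  have hJm : ∀ y : Km, J (y : Hb) = -(Complex.I • (y : Hb)) := fun y => (hKm y).mp y.2
  -- key computation of ω on sums
  have hcomp : ∀ (a b : Hb) (x : Kp), J a = Complex.I • a → J b = -(Complex.I • b) →
      ω (a + b) ((x : Hb) + ((U x : Km) : Hb)) =
        Complex.I * (⟪a, (x : Hb)⟫_ℂ - ⟪b, ((U x : Km) : Hb)⟫_ℂ) := by
    intro a b x ha hb
    rw [hJ]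
    have hx := hJp x
    have hux := hJm (U x)
    rw [map_add, hx, hux]
    simp only [inner_add_left, inner_add_right, inner_neg_right, inner_smul_right]
    have h1 : ⟪a, ((U x : Km) : Hb)⟫_ℂ = 0 := horth _ _ ha (hJm (U x))
    have h2 : ⟪b, (x : Hb)⟫_ℂ = 0 := by
      rw [← inner_conj_symm]
      rw [horth _ _ (hJp x) hb]
      simp
    rw [h1, h2]
    ring
  ext z
  constructor
  · -- ℓ ⊆ ℓ°
    intro hz w hw
    rw [hℓ] at hz hw
    obtain ⟨x, rfl⟩ := hz
    obtain ⟨y, rfl⟩ := hw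
    rw [hcomp _ _ y (hJp x) (hJm (U x))]
    rw [hUinner x y]
    have hxy : ⟪(x : Hb), (y : Hb)⟫_ℂ = ⟪(x : Hb), (y : Hb)⟫_ℂ := rfl
    rw [sub_self, mul_zero]
  · -- ℓ° ⊆ ℓ
    intro hz
    simp only [Set.mem_setOf_eq] at hz
    -- decompose z
    set a : Hb := ((2 : ℂ)⁻¹) • (z - Complex.I • J z) with ha_def
    set b : Hb := ((2 : ℂ)⁻¹) • (z + Complex.I • J z) with hb_def
    have hab : a + b = z := by
      rw [ha_def, hb_def, ← smul_add]
      have : z - Complex.I • J z + (z + Complex.I • J z) = (2 : ℂ) • z := by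
        rw [two_smul]; abel
      rw [this, smul_smul]
      norm_num
    have haK : J a = Complex.I • a := by
      rw [ha_def, map_smul, map_sub, map_smul, hsq, smul_smul, smul_sub, smul_smul]
      match_scalars <;> ring_nf <;> simp [Complex.I_sq] <;> ring
    have hbK : J b = -(Complex.I • b) := by
      rw [hb_def, map_smul, map_add, map_smul, hsq, smul_smul, ← smul_neg, smul_add,
        smul_smul]
      match_scalars <;> ring_nf <;> simp [Complex.I_sq] <;> ring
    have haKp : a ∈ Kp := (hKp a).mpr haK
    have hbKm : b ∈ Km := (hKm b).mpr hbK
    -- the orthogonality condition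
    have key : ∀ x : Kp, ⟪a, (x : Hb)⟫_ℂ = ⟪b, ((U x : Km) : Hb)⟫_ℂ := by
      intro x
      have hw : (x : Hb) + ((U x : Km) : Hb) ∈ ℓ := by
        rw [hℓ]; exact ⟨x, rfl⟩
      have := hz _ hw
      rw [← hab] at this
      rw [hcomp a b x haK hbK] at this
      have h0 : ⟪a, (x : Hb)⟫_ℂ - ⟪b, ((U x : Km) : Hb)⟫_ℂ = 0 := by
        rcases mul_eq_zero.mp this with h | h
        · exact absurd h Complex.I_ne_zero
        · exact h
      exact sub_eq_zero.mp h0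
    -- b = U ⟨a, haKp⟩
    have hb_eq : b = ((U ⟨a, haKp⟩ : Km) : Hb) := by
      set c : Km := ⟨b, hbKm⟩ - U ⟨a, haKp⟩ with hc_def
      have hc0 : ∀ x : Kp, ⟪(c : Hb), ((U x : Km) : Hb)⟫_ℂ = 0 := by
        intro x
        have hcc : (c : Hb) = b - ((U ⟨a, haKp⟩ : Km) : Hb) := rfl
        have hca : (↑(⟨a, haKp⟩ : Kp) : Hb) = a := rfl
        rw [hcc, inner_sub_left, hUinner ⟨a, haKp⟩ x, hca, ← key x, sub_self]
      have hcself : ⟪(c : Hb), (c : Hb)⟫_ℂ = 0 := by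
        obtain ⟨x, hx⟩ := U.surjective c
        have := hc0 x
        rwa [hx] at this
      have : (c : Hb) = 0 := inner_self_eq_zero.mp hcself
      have hcz : c = 0 := Subtype.ext this
      have : (⟨b, hbKm⟩ : Km) = U ⟨a, haKp⟩ := by
        have := sub_eq_zero.mp hcz
        exact this
      exact congrArg Subtype.val this
    rw [hℓ]
    exact ⟨⟨a, haKp⟩, by rw [← hab, hb_eq]⟩
end

section
/- Let (H_b, ω) be a symplectic Hilbert space whose associated operator J (defined by ω(x,y) = ⟨x,Jy⟩) satisfies J² = -I. For every Lagrangian plane ℓ of (H_b, ω) there exists a unique unitary map U : Ker(J - i) → Ker(J + i) such that ℓ = {x + Ux : x ∈ Ker(J - i)}. -/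
open scoped InnerProductSpace

/-- Let `(H_b, ω)` be a symplectic Hilbert space whose associated
operator `J` (with `ω x y = ⟪x, J y⟫`) satisfies `J² = -I`.  For every Lagrangian plane
`ℓ` of `(H_b, ω)` there is a unique unitary map (surjective linear isometry)
`U : Ker (J - i) → Ker (J + i)` with `ℓ = {x + U x : x ∈ Ker (J - i)}`. -/
theorem statement4
    {Hb : Type*} [NormedAddCommGroup Hb] [InnerProductSpace ℂ Hb] [CompleteSpace Hb]
    (ω : Hb →L⋆[ℂ] Hb →L[ℂ] ℂ)
    (hnondeg : ∀ x : Hb, (∀ y : Hb, ω x y = 0) → x = 0)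
    (hskew : ∀ x y : Hb, ω x y = -(starRingEnd ℂ) (ω y x))
    (J : Hb →L[ℂ] Hb)
    (hJ : ∀ x y : Hb, ω x y = ⟪x, J y⟫_ℂ)
    (hsq : ∀ x : Hb, J (J x) = -x)
    (Kp Km : Submodule ℂ Hb)
    (hKp : ∀ x : Hb, x ∈ Kp ↔ J x = Complex.I • x)
    (hKm : ∀ x : Hb, x ∈ Km ↔ J x = -(Complex.I • x))
    (ℓ : Submodule ℂ Hb)
    (hLag : (ℓ : Set Hb) = {x : Hb | ∀ y ∈ ℓ, ω x y = 0}) :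
    ∃! U : Kp ≃ₗᵢ[ℂ] Km,
      (ℓ : Set Hb) = {z : Hb | ∃ x : Kp, z = (x : Hb) + ((U x : Km) : Hb)} := by
  classical
  have hmem : ∀ x : Hb, x ∈ ℓ ↔ ∀ y ∈ ℓ, ω x y = 0 := fun x => Set.ext_iff.mp hLag x
  -- J is skew-adjoint
  have hskewJ : ∀ x y : Hb, ⟪J x, y⟫_ℂ = -⟪x, J y⟫_ℂ := by
    intro x y
    have h3 := hskew x y
    rw [hJ x y, hJ y x, inner_conj_symm] at h3
    linear_combination h3
  -- Kp ⊥ Km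
  have horth : ∀ u ∈ Kp, ∀ v ∈ Km, ⟪u, v⟫_ℂ = 0 := by
    intro u hu v hv
    have h := hskewJ u v
    rw [(hKp u).mp hu, (hKm v).mp hv] at h
    rw [inner_smul_left, inner_neg_right, inner_smul_right, Complex.conj_I] at h
    have h2 : (2 * Complex.I) * ⟪u, v⟫_ℂ = 0 := by linear_combination -h
    rcases mul_eq_zero.mp h2 with h3 | h3
    · exact absurd h3 (by simp [Complex.I_ne_zero])
    · exact h3
  -- projections
  set Pp : Hb →ₗ[ℂ] Hb :=
    (2 : ℂ)⁻¹ • ((LinearMap.id : Hb →ₗ[ℂ] Hb) - Complex.I • (J : Hb →ₗ[ℂ] Hb)) with hPpdef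
  set Pm : Hb →ₗ[ℂ] Hb :=
    (2 : ℂ)⁻¹ • ((LinearMap.id : Hb →ₗ[ℂ] Hb) + Complex.I • (J : Hb →ₗ[ℂ] Hb)) with hPmdef
  have hPp : ∀ z : Hb, Pp z = (2 : ℂ)⁻¹ • (z - Complex.I • J z) := fun z => rfl
  have hPm : ∀ z : Hb, Pm z = (2 : ℂ)⁻¹ • (z + Complex.I • J z) := fun z => rfl
  have hsum : ∀ z : Hb, Pp z + Pm z = z := by
    intro z; rw [hPp, hPm]; module
  have hIPp : ∀ z : Hb, Complex.I • Pp z = (2 : ℂ)⁻¹ • (Complex.I • z + J z) := by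
    intro z
    rw [hPp, smul_comm, smul_sub, smul_smul, Complex.I_mul_I]
    module
  have hIPm : ∀ z : Hb, Complex.I • Pm z = (2 : ℂ)⁻¹ • (Complex.I • z - J z) := by
    intro z
    rw [hPm, smul_comm, smul_add, smul_smul, Complex.I_mul_I]
    module
  have hPpKp : ∀ z : Hb, Pp z ∈ Kp := by
    intro z
    rw [hKp, hIPp, hPp, map_smul, map_sub, map_smul, hsq]
    module
  have hPmKm : ∀ z : Hb, Pm z ∈ Km := by
    intro z
    rw [hKm, hIPm, hPm, map_smul, map_add, map_smul, hsq]
    module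
  have hPpid : ∀ a ∈ Kp, Pp a = a := by
    intro a ha
    rw [hPp, (hKp a).mp ha, smul_smul, Complex.I_mul_I]
    module
  have hPmid : ∀ b ∈ Km, Pm b = b := by
    intro b hb
    rw [hPm, (hKm b).mp hb, smul_neg, smul_smul, Complex.I_mul_I]
    module
  have hPmKp0 : ∀ a ∈ Kp, Pm a = 0 := by
    intro a ha
    rw [hPm, (hKp a).mp ha, smul_smul, Complex.I_mul_I]
    module
  have hPpKm0 : ∀ b ∈ Km, Pp b = 0 := by
    intro b hb
    rw [hPp, (hKm b).mp hb, smul_neg, smul_smul, Complex.I_mul_I]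
    module
  have hJdec : ∀ z : Hb, J z = Complex.I • Pp z - Complex.I • Pm z := by
    intro z
    conv_lhs => rw [← hsum z]
    rw [map_add, (hKp _).mp (hPpKp z), (hKm _).mp (hPmKm z)]
    module
  -- equal norms of the two components of an element of ℓ
  have hnorm : ∀ z ∈ ℓ, ‖Pp z‖ = ‖Pm z‖ := by
    intro z hz
    have h0 : ω z z = 0 := (hmem z).mp hz z hz
    rw [hJ] at h0
    obtain ⟨a, b, ha, hb, hzab, hJz⟩ :
        ∃ a b : Hb, a ∈ Kp ∧ b ∈ Km ∧ z = a + b ∧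
          J z = Complex.I • a - Complex.I • b :=
      ⟨Pp z, Pm z, hPpKp z, hPmKm z, (hsum z).symm, hJdec z⟩
    have hPpz : Pp z = a := by
      rw [hzab, map_add, hPpid a ha, hPpKm0 b hb, add_zero]
    have hPmz : Pm z = b := by
      rw [hzab, map_add, hPmKp0 a ha, hPmid b hb, zero_add]
    rw [hPpz, hPmz]
    have hab : ⟪a, b⟫_ℂ = 0 := horth a ha b hb
    have hba : ⟪b, a⟫_ℂ = 0 := by
      rw [← inner_conj_symm, hab, map_zero]
    rw [hJz] at h0
    rw [hzab] at h0
    rw [inner_add_left, inner_sub_right, inner_sub_right, inner_smul_right,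
      inner_smul_right, inner_smul_right, inner_smul_right, hab, hba] at h0
    have hinner : ⟪a, a⟫_ℂ = ⟪b, b⟫_ℂ := by
      linear_combination (-Complex.I) * h0 +
        (⟪a, a⟫_ℂ - ⟪b, b⟫_ℂ) * Complex.I_mul_I
    rw [inner_self_eq_norm_sq_to_K, inner_self_eq_norm_sq_to_K] at hinner
    have h2 : ‖a‖ ^ 2 = ‖b‖ ^ 2 := by exact_mod_cast hinner
    exact (sq_eq_sq₀ (norm_nonneg _) (norm_nonneg _)).mp h2
  -- pythagoras
  have hpyth : ∀ z : Hb, ‖z‖ ^ 2 = ‖Pp z‖ ^ 2 + ‖Pm z‖ ^ 2 := by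
    intro z
    conv_lhs => rw [← hsum z]
    rw [@norm_add_sq ℂ, horth _ (hPpKp z) _ (hPmKm z)]
    simp
  have hnormℓ : ∀ z ∈ ℓ, ‖z‖ = Real.sqrt 2 * ‖Pp z‖ := by
    intro z hz
    have h1 : ‖z‖ ^ 2 = (Real.sqrt 2 * ‖Pp z‖) ^ 2 := by
      rw [mul_pow, Real.sq_sqrt (by norm_num : (0:ℝ) ≤ 2)]
      have := hpyth z
      rw [← hnorm z hz] at this
      linarith
    exact (sq_eq_sq₀ (norm_nonneg _) (by positivity)).mp h1
  -- closedness
  have hKpcl : IsClosed (Kp : Set Hb) := by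
    have : (Kp : Set Hb) = {x : Hb | J x - Complex.I • x = 0} := by
      ext x; simp only [SetLike.mem_coe, hKp, Set.mem_setOf_eq, sub_eq_zero]
    rw [this]
    exact isClosed_eq (J.continuous.sub (continuous_id.const_smul _)) continuous_const
  have hKmcl : IsClosed (Km : Set Hb) := by
    have : (Km : Set Hb) = {x : Hb | J x + Complex.I • x = 0} := by
      ext x
      simp only [SetLike.mem_coe, hKm, Set.mem_setOf_eq, add_eq_zero_iff_eq_neg]
    rw [this]
    exact isClosed_eq (J.continuous.add (continuous_id.const_smul _)) continuous_const
  have hℓcl : IsClosed (ℓ : Set Hb) := by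
    rw [hLag]
    have : {x : Hb | ∀ y ∈ ℓ, ω x y = 0} = ⋂ y ∈ ℓ, {x : Hb | ω x y = 0} := by
      ext x; simp
    rw [this]
    refine isClosed_biInter fun y hy => ?_
    have hc : Continuous fun x : Hb => (ω x) y := by
      have : (fun x : Hb => (ω x) y) = fun x => ⟪x, J y⟫_ℂ := funext fun x => hJ x y
      rw [this]
      exact Continuous.inner continuous_id continuous_const
    exact isClosed_eq hc continuous_const
  haveI : CompleteSpace Kp := hKpcl.completeSpace_coe
  haveI : CompleteSpace Km := hKmcl.completeSpace_coe
  haveI : CompleteSpace ℓ := hℓcl.completeSpace_coe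
  -- the two restriction maps
  set φ : ℓ →ₗ[ℂ] Kp :=
    LinearMap.codRestrict Kp (Pp.comp ℓ.subtype) (fun z => hPpKp z) with hφdef
  set ψ : ℓ →ₗ[ℂ] Km :=
    LinearMap.codRestrict Km (Pm.comp ℓ.subtype) (fun z => hPmKm z) with hψdef
  have hφ : ∀ z : ℓ, (φ z : Hb) = Pp (z : Hb) := fun z => rfl
  have hψ : ∀ z : ℓ, (ψ z : Hb) = Pm (z : Hb) := fun z => rfl
  have hφnorm : ∀ z : ℓ, ‖(z : Hb)‖ = Real.sqrt 2 * ‖φ z‖ := fun z => hnormℓ z z.2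
  have hψnorm : ∀ z : ℓ, ‖(z : Hb)‖ = Real.sqrt 2 * ‖ψ z‖ := by
    intro z
    have : ‖ψ z‖ = ‖φ z‖ := by
      show ‖(ψ z : Hb)‖ = ‖(φ z : Hb)‖
      rw [hφ, hψ, ← hnorm _ z.2]
    rw [this]; exact hφnorm z
  -- injectivity
  have hφinj : Function.Injective φ := by
    intro z w h
    have h2 : ‖((z - w : ℓ) : Hb)‖ = 0 := by
      rw [hφnorm (z - w), map_sub, h, sub_self]
      simp
    have : (z : Hb) - (w : Hb) = 0 := by
      rwa [norm_eq_zero] at h2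
    exact Subtype.ext (sub_eq_zero.mp this)
  have hψinj : Function.Injective ψ := by
    intro z w h
    have h2 : ‖((z - w : ℓ) : Hb)‖ = 0 := by
      rw [hψnorm (z - w), map_sub, h, sub_self]
      simp
    have : (z : Hb) - (w : Hb) = 0 := by
      rwa [norm_eq_zero] at h2
    exact Subtype.ext (sub_eq_zero.mp this)
  -- scaled isometries
  set c : ℂ := ((Real.sqrt 2 : ℝ) : ℂ) with hc
  have hcnorm : ‖c‖ = Real.sqrt 2 := by
    rw [hc, Complex.norm_real, Real.norm_eq_abs, abs_of_nonneg (Real.sqrt_nonneg _)]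
  have hcne : c ≠ 0 := by
    rw [hc]
    simp only [ne_eq, Complex.ofReal_eq_zero]
    positivity
  have hφ₂norm : ∀ z : ℓ, ‖(c • φ) z‖ = ‖z‖ := by
    intro z
    rw [LinearMap.smul_apply, norm_smul, hcnorm]
    exact (hφnorm z).symm
  have hψ₂norm : ∀ z : ℓ, ‖(c • ψ) z‖ = ‖z‖ := by
    intro z
    rw [LinearMap.smul_apply, norm_smul, hcnorm]
    exact (hψnorm z).symm
  set φ₂ : ℓ →ₗᵢ[ℂ] Kp := ⟨c • φ, hφ₂norm⟩ with hφ₂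
  set ψ₂ : ℓ →ₗᵢ[ℂ] Km := ⟨c • ψ, hψ₂norm⟩ with hψ₂
  -- ranges are closed
  have hrangeφcl : IsClosed ((LinearMap.range φ : Submodule ℂ Kp) : Set Kp) := by
    have heq : (Set.range φ₂ : Set Kp) = ((LinearMap.range φ : Submodule ℂ Kp) : Set Kp) := by
      ext u
      simp only [Set.mem_range, SetLike.mem_coe, LinearMap.mem_range]
      constructor
      · rintro ⟨z, rfl⟩
        exact ⟨c • z, by show φ (c • z) = (c • φ) z; rw [map_smul]; rfl⟩
      · rintro ⟨z, rfl⟩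
        refine ⟨c⁻¹ • z, ?_⟩
        show (c • φ) (c⁻¹ • z) = φ z
        rw [LinearMap.smul_apply, map_smul, smul_smul, mul_inv_cancel₀ hcne, one_smul]
    rw [← heq]
    exact φ₂.isometry.isClosedEmbedding.isClosed_range
  have hrangeψcl : IsClosed ((LinearMap.range ψ : Submodule ℂ Km) : Set Km) := by
    have heq : (Set.range ψ₂ : Set Km) = ((LinearMap.range ψ : Submodule ℂ Km) : Set Km) := by
      ext u
      simp only [Set.mem_range, SetLike.mem_coe, LinearMap.mem_range]
      constructor
      · rintro ⟨z, rfl⟩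
        exact ⟨c • z, by show ψ (c • z) = (c • ψ) z; rw [map_smul]; rfl⟩
      · rintro ⟨z, rfl⟩
        refine ⟨c⁻¹ • z, ?_⟩
        show (c • ψ) (c⁻¹ • z) = ψ z
        rw [LinearMap.smul_apply, map_smul, smul_smul, mul_inv_cancel₀ hcne, one_smul]
    rw [← heq]
    exact ψ₂.isometry.isClosedEmbedding.isClosed_range
  haveI : CompleteSpace (LinearMap.range φ) := hrangeφcl.completeSpace_coe
  haveI : CompleteSpace (LinearMap.range ψ) := hrangeψcl.completeSpace_coe
  -- surjectivity
  have hφsurj : Function.Surjective φ := by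
    rw [← LinearMap.range_eq_top, ← Submodule.orthogonal_eq_bot_iff, Submodule.eq_bot_iff]
    intro u hu
    rw [Submodule.mem_orthogonal] at hu
    have hu2 : ∀ y ∈ ℓ, ⟪(u : Hb), Pp y⟫_ℂ = 0 := by
      intro y hy
      have h1 := hu (φ ⟨y, hy⟩) (LinearMap.mem_range_self φ ⟨y, hy⟩)
      have h2 : ⟪Pp y, (u : Hb)⟫_ℂ = 0 := h1
      rw [← inner_conj_symm, h2, map_zero]
    have humem : (u : Hb) ∈ ℓ := by
      rw [hmem]
      intro y hy
      rw [hJ, hJdec y, inner_sub_right, inner_smul_right, inner_smul_right,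
        hu2 y hy, horth (u : Hb) u.2 (Pm y) (hPmKm y)]
      ring
    have h3 : Pm (u : Hb) = 0 := hPmKp0 _ u.2
    have h4 : Pp (u : Hb) = 0 := by
      have : ‖Pp (u : Hb)‖ = 0 := by rw [hnorm _ humem, h3, norm_zero]
      rwa [norm_eq_zero] at this
    have h5 : (u : Hb) = 0 := by
      rw [← hsum (u : Hb), h3, h4, add_zero]
    exact Subtype.ext h5
  have hψsurj : Function.Surjective ψ := by
    rw [← LinearMap.range_eq_top, ← Submodule.orthogonal_eq_bot_iff, Submodule.eq_bot_iff]
    intro u hu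
    rw [Submodule.mem_orthogonal] at hu
    have hu2 : ∀ y ∈ ℓ, ⟪(u : Hb), Pm y⟫_ℂ = 0 := by
      intro y hy
      have h1 := hu (ψ ⟨y, hy⟩) (LinearMap.mem_range_self ψ ⟨y, hy⟩)
      have h2 : ⟪Pm y, (u : Hb)⟫_ℂ = 0 := h1
      rw [← inner_conj_symm, h2, map_zero]
    have humem : (u : Hb) ∈ ℓ := by
      rw [hmem]
      intro y hy
      have hup : ⟪(u : Hb), Pp y⟫_ℂ = 0 := by
        rw [← inner_conj_symm, horth (Pp y) (hPpKp y) (u : Hb) u.2, map_zero]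
      rw [hJ, hJdec y, inner_sub_right, inner_smul_right, inner_smul_right,
        hu2 y hy, hup]
      ring
    have h3 : Pp (u : Hb) = 0 := hPpKm0 _ u.2
    have h4 : Pm (u : Hb) = 0 := by
      have : ‖Pm (u : Hb)‖ = 0 := by rw [← hnorm _ humem, h3, norm_zero]
      rwa [norm_eq_zero] at this
    have h5 : (u : Hb) = 0 := by
      rw [← hsum (u : Hb), h3, h4, zero_add]
    exact Subtype.ext h5
  -- build the unitary
  set e₁ : ℓ ≃ₗ[ℂ] Kp := LinearEquiv.ofBijective φ ⟨hφinj, hφsurj⟩ with he₁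
  set e₂ : ℓ ≃ₗ[ℂ] Km := LinearEquiv.ofBijective ψ ⟨hψinj, hψsurj⟩ with he₂
  set U₀ : Kp ≃ₗ[ℂ] Km := e₁.symm.trans e₂ with hU₀
  have hU₀apply : ∀ z : ℓ, U₀ (φ z) = ψ z := by
    intro z
    show e₂ (e₁.symm (e₁ z)) = ψ z
    rw [e₁.symm_apply_apply]
    rfl
  have hU₀norm : ∀ x : Kp, ‖U₀ x‖ = ‖x‖ := by
    intro x
    obtain ⟨z, rfl⟩ : ∃ z : ℓ, φ z = x := hφsurj x
    rw [hU₀apply z]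
    show ‖(ψ z : Hb)‖ = ‖(φ z : Hb)‖
    rw [hφ, hψ, hnorm _ z.2]
  have hgraph : (ℓ : Set Hb) =
      {z : Hb | ∃ x : Kp, z = (x : Hb) +
        (((⟨U₀, hU₀norm⟩ : Kp ≃ₗᵢ[ℂ] Km) x : Km) : Hb)} := by
    ext w
    simp only [Set.mem_setOf_eq, SetLike.mem_coe]
    constructor
    · intro hw
      refine ⟨φ ⟨w, hw⟩, ?_⟩
      have : (⟨U₀, hU₀norm⟩ : Kp ≃ₗᵢ[ℂ] Km) (φ ⟨w, hw⟩) = ψ ⟨w, hw⟩ := hU₀apply _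
      rw [this, hφ, hψ]
      exact (hsum w).symm
    · rintro ⟨x, rfl⟩
      obtain ⟨z, rfl⟩ : ∃ z : ℓ, φ z = x := hφsurj x
      have : (⟨U₀, hU₀norm⟩ : Kp ≃ₗᵢ[ℂ] Km) (φ z) = ψ z := hU₀apply _
      rw [this, hφ, hψ, hsum]
      exact z.2
  refine ⟨⟨U₀, hU₀norm⟩, hgraph, ?_⟩
  -- uniqueness
  intro V hV
  have hsubKpKm : ∀ (a a' : Kp) (b b' : Km),
      (a : Hb) + (b : Hb) = (a' : Hb) + (b' : Hb) → a = a' ∧ b = b' := by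
    intro a a' b b' h
    have h1 : Pp ((a : Hb) + b) = Pp ((a' : Hb) + b') := by rw [h]
    rw [map_add, map_add, hPpid _ a.2, hPpid _ a'.2, hPpKm0 _ b.2, hPpKm0 _ b'.2,
      add_zero, add_zero] at h1
    have h2 : (b : Hb) = b' := by
      have := h
      rw [h1] at this
      exact add_left_cancel this
    exact ⟨Subtype.ext h1, Subtype.ext h2⟩
  ext x
  have hx : (x : Hb) + (V x : Hb) ∈ (ℓ : Set Hb) := by
    rw [hV]
    exact ⟨x, rfl⟩
  have hx2 : (x : Hb) + (V x : Hb) ∈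
      {z : Hb | ∃ y : Kp, z = (y : Hb) +
        (((⟨U₀, hU₀norm⟩ : Kp ≃ₗᵢ[ℂ] Km) y : Km) : Hb)} := by
    rw [← hgraph]
    exact hx
  obtain ⟨y, hy⟩ := hx2
  obtain ⟨hxy, hVU⟩ := hsubKpKm x y (V x) ((⟨U₀, hU₀norm⟩ : Kp ≃ₗᵢ[ℂ] Km) y) hy
  rw [hVU, hxy]
end

section
/- Let (H_b, ω) be a symplectic Hilbert space whose associated operator J satisfies J² = -I, and let U₁, U₂ : Ker(J - i) → Ker(J + i) be unitary maps with associated Lagrangian planes ℓ₁ = {x + U₁x : x ∈ Ker(J - i)} and ℓ₂ = {x + U₂x : x ∈ Ker(J - i)}. Then the map x ↦ x + U₁x restricts to a linear bijection from Ker(U₂*U₁ - I) = {x ∈ Ker(J - i) : U₂*U₁x = x} onto ℓ₁ ∩ ℓ₂; in particular these two spaces have the same dimension. -/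
open scoped InnerProductSpace

/-- With `J² = -I` and unitaries `U₁, U₂ : Ker (J - i) → Ker (J + i)`
with Lagrangian planes `ℓ₁ = {x + U₁ x}` and `ℓ₂ = {x + U₂ x}`, the map `x ↦ x + U₁ x`
restricts to a (linear) bijection from `Ker (U₂* U₁ - I) = {x : U₂.symm (U₁ x) = x}`
onto `ℓ₁ ∩ ℓ₂`. -/
theorem statement5
    {Hb : Type*} [NormedAddCommGroup Hb] [InnerProductSpace ℂ Hb] [CompleteSpace Hb]
    (ω : Hb →L⋆[ℂ] Hb →L[ℂ] ℂ)
    (hnondeg : ∀ x : Hb, (∀ y : Hb, ω x y = 0) → x = 0)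
    (hskew : ∀ x y : Hb, ω x y = -(starRingEnd ℂ) (ω y x))
    (J : Hb →L[ℂ] Hb)
    (hJ : ∀ x y : Hb, ω x y = ⟪x, J y⟫_ℂ)
    (hsq : ∀ x : Hb, J (J x) = -x)
    (Kp Km : Submodule ℂ Hb)
    (hKp : ∀ x : Hb, x ∈ Kp ↔ J x = Complex.I • x)
    (hKm : ∀ x : Hb, x ∈ Km ↔ J x = -(Complex.I • x))
    (U₁ U₂ : Kp ≃ₗᵢ[ℂ] Km)
    (ℓ₁ ℓ₂ : Set Hb)
    (hℓ₁ : ℓ₁ = {z : Hb | ∃ x : Kp, z = (x : Hb) + ((U₁ x : Km) : Hb)})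
    (hℓ₂ : ℓ₂ = {z : Hb | ∃ x : Kp, z = (x : Hb) + ((U₂ x : Km) : Hb)}) :
    Set.BijOn (fun x : Kp => (x : Hb) + ((U₁ x : Km) : Hb))
      {x : Kp | U₂.symm (U₁ x) = x} (ℓ₁ ∩ ℓ₂) := by
  -- Kp ⊓ Km = 0
  have hzero : ∀ a : Hb, a ∈ Kp → a ∈ Km → a = 0 := by
    intro a hp hm
    have h1 := (hKp a).mp hp
    have h2 := (hKm a).mp hm
    have : Complex.I • a = -(Complex.I • a) := h1 ▸ h2
    have h3 : (2 : ℂ) • (Complex.I • a) = 0 := by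
      rw [two_smul]; nth_rewrite 1 [this]; exact neg_add_cancel _
    have h4 : ((2 : ℂ) * Complex.I) • a = 0 := by rwa [mul_smul]
    have h5 : (2 : ℂ) * Complex.I ≠ 0 := by
      simp [Complex.I_ne_zero]
    exact (smul_eq_zero.mp h4).resolve_left h5
  -- uniqueness of decomposition
  have huniq : ∀ (p p' : Kp) (m m' : Km),
      (p : Hb) + m = (p' : Hb) + m' → p = p' ∧ m = m' := by
    intro p p' m m' h
    have hp : ((p : Hb) - p') = (m' : Hb) - m := by
      rw [sub_eq_sub_iff_add_eq_add, h, add_comm]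
    have hmemp : ((p : Hb) - p') ∈ Kp := Kp.sub_mem p.2 p'.2
    have hmemm : ((p : Hb) - p') ∈ Km := hp ▸ Km.sub_mem m'.2 m.2
    have h0 := hzero _ hmemp hmemm
    have hpp : p = p' := Subtype.ext (sub_eq_zero.mp h0)
    have hmm : m = m' := by
      apply Subtype.ext
      have : (m' : Hb) - m = 0 := hp ▸ h0
      exact (sub_eq_zero.mp this).symm
    exact ⟨hpp, hmm⟩
  constructor
  · intro x hx
    have hx' : U₂.symm (U₁ x) = x := hx
    have hU : U₂ x = U₁ x := by
      conv_lhs => rw [← hx', U₂.apply_symm_apply]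
    constructor
    · rw [hℓ₁]; exact ⟨x, rfl⟩
    · rw [hℓ₂]; exact ⟨x, by rw [hU]⟩
  constructor
  · intro x _ y _ h
    simp only at h
    exact (huniq x y (U₁ x) (U₁ y) h).1
  · rintro z ⟨hz1, hz2⟩
    rw [hℓ₁] at hz1; rw [hℓ₂] at hz2
    obtain ⟨x, hx⟩ := hz1
    obtain ⟨y, hy⟩ := hz2
    obtain ⟨h1, h2⟩ := huniq x y (U₁ x) (U₂ y) (hx ▸ hy)
    subst h1
    refine ⟨x, ?_, hx.symm⟩
    show U₂.symm (U₁ x) = x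
    rw [h2, U₂.symm_apply_apply]
end

section
/- Let H₁, H₂ be complex Hilbert spaces, V : H₁ → H₂ a unitary map, H_b := H₁ × H₂ with symplectic form ω(z,w) := ⟨z, Jw⟩ where J(x,y) := (V*y, -Vx). Then: (i) for every unitary operator 𝒰 : H₁ → H₁, the subspace ℓ_𝒰 := {(x, iVx) + (𝒰x, -iV𝒰x) : x ∈ H₁} is a Lagrangian plane of (H_b, ω); (ii) every Lagrangian plane of (H_b, ω) equals ℓ_𝒰 for a unique unitary 𝒰 of H₁; (iii) if ℓ₁ = ℓ_{𝒰₁} and ℓ₂ = ℓ_{𝒰₂}, then the map x ↦ (x, iVx) + (𝒰₁x, -iV𝒰₁x) restricts to a linear bijection from Ker(𝒰₂*𝒰₁ - I) ⊆ H₁ onto ℓ₁ ∩ ℓ₂. -/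
open scoped InnerProductSpace

set_option linter.unusedSectionVars false

noncomputable section Statement8Aux

variable {H₁ H₂ : Type*} [NormedAddCommGroup H₁] [InnerProductSpace ℂ H₁] [CompleteSpace H₁]
    [NormedAddCommGroup H₂] [InnerProductSpace ℂ H₂] [CompleteSpace H₂]

/-- `p z = i z₁ + V⁻¹ z₂`. -/
def st8pL (V : H₁ ≃ₗᵢ[ℂ] H₂) : WithLp 2 (H₁ × H₂) →ₗ[ℂ] H₁ where
  toFun z := Complex.I • z.fst + V.symm z.snd
  map_add' z w := by
    simp only [WithLp.add_fst, WithLp.add_snd, smul_add, map_add]; abel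
  map_smul' c z := by
    simp only [WithLp.smul_fst, WithLp.smul_snd, map_smul, smul_smul, mul_comm,
      RingHom.id_apply, smul_add]

/-- `m z = i z₁ - V⁻¹ z₂`. -/
def st8mL (V : H₁ ≃ₗᵢ[ℂ] H₂) : WithLp 2 (H₁ × H₂) →ₗ[ℂ] H₁ where
  toFun z := Complex.I • z.fst - V.symm z.snd
  map_add' z w := by
    simp only [WithLp.add_fst, WithLp.add_snd, smul_add, map_add]; abel
  map_smul' c z := by
    simp only [WithLp.smul_fst, WithLp.smul_snd, map_smul, smul_smul, mul_comm,
      RingHom.id_apply, smul_sub]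

@[simp] lemma st8pL_apply (V : H₁ ≃ₗᵢ[ℂ] H₂) (z : WithLp 2 (H₁ × H₂)) :
    st8pL V z = Complex.I • z.fst + V.symm z.snd := rfl
@[simp] lemma st8mL_apply (V : H₁ ≃ₗᵢ[ℂ] H₂) (z : WithLp 2 (H₁ × H₂)) :
    st8mL V z = Complex.I • z.fst - V.symm z.snd := rfl

/-- The generator of `ℓ_𝒰`. -/
def st8gen (V : H₁ ≃ₗᵢ[ℂ] H₂) (𝒰 : H₁ ≃ₗᵢ[ℂ] H₁) (x : H₁) : WithLp 2 (H₁ × H₂) :=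
  (WithLp.equiv 2 (H₁ × H₂)).symm (x, Complex.I • V x)
    + (WithLp.equiv 2 (H₁ × H₂)).symm (𝒰 x, -(Complex.I • V (𝒰 x)))

lemma st8pL_gen (V : H₁ ≃ₗᵢ[ℂ] H₂) (𝒰 : H₁ ≃ₗᵢ[ℂ] H₁) (x : H₁) :
    st8pL V (st8gen V 𝒰 x) = (2 * Complex.I) • x := by
  simp only [st8gen, map_add, st8pL_apply, WithLp.add_fst, WithLp.add_snd,
    WithLp.equiv_symm_apply, WithLp.toLp_fst, WithLp.toLp_snd, map_smul, map_neg,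
    LinearIsometryEquiv.symm_apply_apply]
  module

lemma st8mL_gen (V : H₁ ≃ₗᵢ[ℂ] H₂) (𝒰 : H₁ ≃ₗᵢ[ℂ] H₁) (x : H₁) :
    st8mL V (st8gen V 𝒰 x) = (2 * Complex.I) • 𝒰 x := by
  simp only [st8gen, map_add, st8mL_apply, WithLp.add_fst, WithLp.add_snd,
    WithLp.equiv_symm_apply, WithLp.toLp_fst, WithLp.toLp_snd, map_smul, map_neg,
    LinearIsometryEquiv.symm_apply_apply]
  module

lemma st8pm_inj (V : H₁ ≃ₗᵢ[ℂ] H₂) {z w : WithLp 2 (H₁ × H₂)}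
    (hp : st8pL V z = st8pL V w) (hm : st8mL V z = st8mL V w) : z = w := by
  simp only [st8pL_apply, st8mL_apply] at hp hm
  have hfst : z.fst = w.fst := by
    have h : (2 * Complex.I) • z.fst = (2 * Complex.I) • w.fst := by
      linear_combination (norm := module) hp + hm
    exact smul_right_injective H₁ (by simp [Complex.I_ne_zero]) h
  have hsnd : z.snd = w.snd := by
    have h : (2 : ℂ) • V.symm z.snd = (2 : ℂ) • V.symm w.snd := by
      linear_combination (norm := module) hp - hm
    have := smul_right_injective H₁ (by norm_num : (2:ℂ) ≠ 0) h
    exact V.symm.injective this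
  exact (WithLp.equiv 2 (H₁ × H₂)).injective (Prod.ext hfst hsnd)

/-- An element with prescribed values of `p` and `m`. -/
def st8zvec (V : H₁ ≃ₗᵢ[ℂ] H₂) (u v : H₁) : WithLp 2 (H₁ × H₂) :=
  (WithLp.equiv 2 (H₁ × H₂)).symm
    ((-(Complex.I/2)) • (u + v), V (((1:ℂ)/2) • (u - v)))

lemma st8pL_zvec (V : H₁ ≃ₗᵢ[ℂ] H₂) (u v : H₁) : st8pL V (st8zvec V u v) = u := by
  simp only [st8zvec, st8pL_apply, WithLp.equiv_symm_apply, WithLp.toLp_fst, WithLp.toLp_snd,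
    LinearIsometryEquiv.symm_apply_apply, smul_smul]
  match_scalars
  · linear_combination (-1/2 : ℂ) * Complex.I_mul_I
  · linear_combination (-1/2 : ℂ) * Complex.I_mul_I

lemma st8mL_zvec (V : H₁ ≃ₗᵢ[ℂ] H₂) (u v : H₁) : st8mL V (st8zvec V u v) = v := by
  simp only [st8zvec, st8mL_apply, WithLp.equiv_symm_apply, WithLp.toLp_fst, WithLp.toLp_snd,
    LinearIsometryEquiv.symm_apply_apply, smul_smul]
  match_scalars
  · linear_combination (-1/2 : ℂ) * Complex.I_mul_I
  · linear_combination (-1/2 : ℂ) * Complex.I_mul_I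

lemma st8omega (V : H₁ ≃ₗᵢ[ℂ] H₂) (J : WithLp 2 (H₁ × H₂) →L[ℂ] WithLp 2 (H₁ × H₂))
    (hJ : ∀ z : WithLp 2 (H₁ × H₂),
      J z = (WithLp.equiv 2 (H₁ × H₂)).symm
        (V.symm ((WithLp.equiv 2 (H₁ × H₂)) z).2, -(V ((WithLp.equiv 2 (H₁ × H₂)) z).1)))
    (z w : WithLp 2 (H₁ × H₂)) :
    ⟪z, J w⟫_ℂ = (Complex.I/2) * (⟪st8pL V z, st8pL V w⟫_ℂ - ⟪st8mL V z, st8mL V w⟫_ℂ) := by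
  have h1 : ⟪z.snd, V w.fst⟫_ℂ = ⟪V.symm z.snd, w.fst⟫_ℂ := by
    conv_rhs => rw [← V.inner_map_map]
    rw [V.apply_symm_apply]
  rw [hJ w]
  simp only [WithLp.prod_inner_apply, WithLp.equiv_symm_apply, WithLp.toLp_fst, WithLp.toLp_snd,
    WithLp.equiv_apply, WithLp.ofLp_fst, WithLp.ofLp_snd, st8pL_apply, st8mL_apply,
    inner_add_left, inner_add_right, inner_sub_left, inner_sub_right,
    inner_smul_left, inner_smul_right, inner_neg_right, Complex.conj_I, h1]
  linear_combination (⟪z.fst, V.symm w.snd⟫_ℂ - ⟪V.symm z.snd, w.fst⟫_ℂ) * Complex.I_mul_I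

lemma st8pm_self (V : H₁ ≃ₗᵢ[ℂ] H₂) (z : WithLp 2 (H₁ × H₂)) :
    ⟪st8pL V z, st8pL V z⟫_ℂ + ⟪st8mL V z, st8mL V z⟫_ℂ = 2 * ⟪z, z⟫_ℂ := by
  simp only [WithLp.prod_inner_apply, WithLp.ofLp_fst, WithLp.ofLp_snd, st8pL_apply, st8mL_apply,
    inner_add_left, inner_add_right, inner_sub_left, inner_sub_right,
    inner_smul_left, inner_smul_right, Complex.conj_I,
    LinearIsometryEquiv.inner_map_map]
  linear_combination (-2 * ⟪z.fst, z.fst⟫_ℂ) * Complex.I_mul_I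

/-- Membership characterization of `ℓ_𝒰`. -/
lemma st8mem_iff (V : H₁ ≃ₗᵢ[ℂ] H₂) (𝒰 : H₁ ≃ₗᵢ[ℂ] H₁) (z : WithLp 2 (H₁ × H₂)) :
    (∃ x : H₁, z = st8gen V 𝒰 x) ↔ st8mL V z = 𝒰 (st8pL V z) := by
  constructor
  · rintro ⟨x, rfl⟩
    rw [st8pL_gen, st8mL_gen, map_smul]
  · intro h
    refine ⟨(-(Complex.I)/2) • st8pL V z, st8pm_inj V ?_ ?_⟩
    · rw [st8pL_gen, smul_smul,
        show (2 * Complex.I) * (-(Complex.I)/2) = 1 by linear_combination (-1 : ℂ) * Complex.I_mul_I,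
        one_smul]
    · rw [st8mL_gen, map_smul, h, smul_smul,
        show (2 * Complex.I) * (-(Complex.I)/2) = 1 by linear_combination (-1 : ℂ) * Complex.I_mul_I,
        one_smul]

/-- Part (i) as a lemma. -/
lemma st8part1 (V : H₁ ≃ₗᵢ[ℂ] H₂) (J : WithLp 2 (H₁ × H₂) →L[ℂ] WithLp 2 (H₁ × H₂))
    (hJ : ∀ z : WithLp 2 (H₁ × H₂),
      J z = (WithLp.equiv 2 (H₁ × H₂)).symm
        (V.symm ((WithLp.equiv 2 (H₁ × H₂)) z).2, -(V ((WithLp.equiv 2 (H₁ × H₂)) z).1)))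
    (𝒰 : H₁ ≃ₗᵢ[ℂ] H₁) :
    {z : WithLp 2 (H₁ × H₂) | ∃ x : H₁, z = st8gen V 𝒰 x}
      = {z : WithLp 2 (H₁ × H₂) |
          ∀ w ∈ {z : WithLp 2 (H₁ × H₂) | ∃ x : H₁, z = st8gen V 𝒰 x}, ⟪z, J w⟫_ℂ = 0} := by
  ext z
  simp only [Set.mem_setOf_eq]
  constructor
  · rintro ⟨x, rfl⟩ w ⟨y, rfl⟩
    rw [st8omega V J hJ, st8pL_gen, st8pL_gen, st8mL_gen, st8mL_gen]
    simp only [inner_smul_left, inner_smul_right, LinearIsometryEquiv.inner_map_map]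
    ring
  · intro h
    rw [st8mem_iff]
    have key : ∀ y, ⟪st8pL V z, y⟫_ℂ = ⟪𝒰.symm (st8mL V z), y⟫_ℂ := by
      intro y
      have h0 := h (st8gen V 𝒰 y) ⟨y, rfl⟩
      rw [st8omega V J hJ, st8pL_gen, st8mL_gen, inner_smul_right, inner_smul_right] at h0
      have h1 : ⟪st8mL V z, 𝒰 y⟫_ℂ = ⟪𝒰.symm (st8mL V z), y⟫_ℂ := by
        conv_rhs => rw [← 𝒰.inner_map_map]
        rw [𝒰.apply_symm_apply]
      rw [h1] at h0
      linear_combination (-1 : ℂ) * h0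
        + (⟪st8pL V z, y⟫_ℂ - ⟪𝒰.symm (st8mL V z), y⟫_ℂ) * Complex.I_mul_I
    have hp : st8pL V z = 𝒰.symm (st8mL V z) := ext_inner_right ℂ key
    rw [hp, 𝒰.apply_symm_apply]

end Statement8Aux




open scoped InnerProductSpace

/-- Let `V : H₁ → H₂` be unitary, `H_b := H₁ × H₂` (ℓ²-product),
`J (x,y) := (V* y, -V x)` and `ω z w := ⟪z, J w⟫`.  Then:
(i) for every unitary `𝒰` of `H₁` the subspace
`ℓ_𝒰 = {(x, iVx) + (𝒰x, -iV𝒰x) : x ∈ H₁}` is a Lagrangian plane of `(H_b, ω)`;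
(ii) every Lagrangian plane of `(H_b, ω)` equals `ℓ_𝒰` for a unique unitary `𝒰`;
(iii) if `ℓ₁ = ℓ_{𝒰₁}`, `ℓ₂ = ℓ_{𝒰₂}` then `x ↦ (x, iVx) + (𝒰₁x, -iV𝒰₁x)`
restricts to a bijection from `Ker (𝒰₂*𝒰₁ - I)` onto `ℓ₁ ∩ ℓ₂`. -/
theorem statement8
    {H₁ H₂ : Type*} [NormedAddCommGroup H₁] [InnerProductSpace ℂ H₁] [CompleteSpace H₁]
    [NormedAddCommGroup H₂] [InnerProductSpace ℂ H₂] [CompleteSpace H₂]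
    (V : H₁ ≃ₗᵢ[ℂ] H₂)
    (J : WithLp 2 (H₁ × H₂) →L[ℂ] WithLp 2 (H₁ × H₂))
    (hJ : ∀ z : WithLp 2 (H₁ × H₂),
      J z = (WithLp.equiv 2 (H₁ × H₂)).symm
        (V.symm ((WithLp.equiv 2 (H₁ × H₂)) z).2, -(V ((WithLp.equiv 2 (H₁ × H₂)) z).1))) :
    -- (i)
    (∀ (𝒰 : H₁ ≃ₗᵢ[ℂ] H₁) (ℓ : Set (WithLp 2 (H₁ × H₂))),
      ℓ = {z : WithLp 2 (H₁ × H₂) | ∃ x : H₁,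
        z = (WithLp.equiv 2 (H₁ × H₂)).symm (x, Complex.I • V x)
          + (WithLp.equiv 2 (H₁ × H₂)).symm (𝒰 x, -(Complex.I • V (𝒰 x)))} →
      ℓ = {z : WithLp 2 (H₁ × H₂) | ∀ w ∈ ℓ, ⟪z, J w⟫_ℂ = 0}) ∧
    -- (ii)
    (∀ ℓ : Submodule ℂ (WithLp 2 (H₁ × H₂)),
      ((ℓ : Set (WithLp 2 (H₁ × H₂))) =
        {z : WithLp 2 (H₁ × H₂) | ∀ w ∈ ℓ, ⟪z, J w⟫_ℂ = 0}) →
      ∃! 𝒰 : H₁ ≃ₗᵢ[ℂ] H₁,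
        (ℓ : Set (WithLp 2 (H₁ × H₂))) = {z : WithLp 2 (H₁ × H₂) | ∃ x : H₁,
          z = (WithLp.equiv 2 (H₁ × H₂)).symm (x, Complex.I • V x)
            + (WithLp.equiv 2 (H₁ × H₂)).symm (𝒰 x, -(Complex.I • V (𝒰 x)))}) ∧
    -- (iii)
    (∀ 𝒰₁ 𝒰₂ : H₁ ≃ₗᵢ[ℂ] H₁,
      Set.BijOn
        (fun x : H₁ => (WithLp.equiv 2 (H₁ × H₂)).symm (x, Complex.I • V x)
          + (WithLp.equiv 2 (H₁ × H₂)).symm (𝒰₁ x, -(Complex.I • V (𝒰₁ x))))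
        {x : H₁ | 𝒰₂.symm (𝒰₁ x) = x}
        ({z : WithLp 2 (H₁ × H₂) | ∃ x : H₁,
          z = (WithLp.equiv 2 (H₁ × H₂)).symm (x, Complex.I • V x)
            + (WithLp.equiv 2 (H₁ × H₂)).symm (𝒰₁ x, -(Complex.I • V (𝒰₁ x)))} ∩
         {z : WithLp 2 (H₁ × H₂) | ∃ x : H₁,
          z = (WithLp.equiv 2 (H₁ × H₂)).symm (x, Complex.I • V x)
            + (WithLp.equiv 2 (H₁ × H₂)).symm (𝒰₂ x, -(Complex.I • V (𝒰₂ x)))})) := by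
  have h2I : (2 * Complex.I) ≠ 0 := by simp [Complex.I_ne_zero]
  refine ⟨?_, ?_, ?_⟩
  · -- (i)
    intro 𝒰 ℓ hℓ
    subst hℓ
    exact st8part1 V J hJ 𝒰
  · -- (ii)
    intro ℓ hℓ
    have hmem : ∀ z, z ∈ ℓ ↔ ∀ w ∈ ℓ, ⟪z, J w⟫_ℂ = 0 := by
      intro z
      have := Set.ext_iff.mp hℓ z
      simpa using this
    have h2 : ∀ z ∈ ℓ, ∀ w ∈ ℓ, ⟪st8pL V z, st8pL V w⟫_ℂ = ⟪st8mL V z, st8mL V w⟫_ℂ := by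
      intro z hz w hw
      have h0 := (hmem z).1 hz w hw
      rw [st8omega V J hJ] at h0
      have hI2 : (Complex.I / 2 : ℂ) ≠ 0 := by simp [Complex.I_ne_zero]
      exact sub_eq_zero.mp ((mul_eq_zero.mp h0).resolve_left hI2)
    have hcl : IsClosed (ℓ : Set (WithLp 2 (H₁ × H₂))) := by
      rw [hℓ]
      have : {z : WithLp 2 (H₁ × H₂) | ∀ w ∈ ℓ, ⟪z, J w⟫_ℂ = 0}
          = ⋂ w ∈ (ℓ : Set (WithLp 2 (H₁ × H₂))), {z : WithLp 2 (H₁ × H₂) | ⟪z, J w⟫_ℂ = 0} := by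
        ext z; simp
      rw [this]
      exact isClosed_biInter fun w hw =>
        isClosed_eq (Continuous.inner continuous_id continuous_const) continuous_const
    haveI : CompleteSpace ℓ := hcl.completeSpace_coe
    have hnorm : ∀ (g : WithLp 2 (H₁ × H₂) →ₗ[ℂ] H₁),
        (∀ z ∈ ℓ, ⟪g z, g z⟫_ℂ = ⟪st8pL V z, st8pL V z⟫_ℂ ∨
          ⟪g z, g z⟫_ℂ = ⟪st8mL V z, st8mL V z⟫_ℂ) →
        ∀ z : ℓ, ‖g.comp ℓ.subtype z‖ = ‖z‖ := by
      intro g hg z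
      have hz := z.2
      have hpm := h2 z hz z hz
      have hself := st8pm_self V (z : WithLp 2 (H₁ × H₂))
      have hgz : ⟪g (z : WithLp 2 (H₁ × H₂)), g (z : WithLp 2 (H₁ × H₂))⟫_ℂ
          = ⟪(z : WithLp 2 (H₁ × H₂)), (z : WithLp 2 (H₁ × H₂))⟫_ℂ := by
        rcases hg z hz with h | h
        · rw [h]; linear_combination (hself + hpm) / 2
        · rw [h]; linear_combination (hself - hpm) / 2
      rw [inner_self_eq_norm_sq_to_K, inner_self_eq_norm_sq_to_K] at hgz
      have h3 : ‖g (z : WithLp 2 (H₁ × H₂))‖ ^ 2 = ‖(z : WithLp 2 (H₁ × H₂))‖ ^ 2 := by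
        exact_mod_cast hgz
      have h4 := congrArg Real.sqrt h3
      rw [Real.sqrt_sq (norm_nonneg _), Real.sqrt_sq (norm_nonneg _)] at h4
      exact h4
    set pIso : ℓ →ₗᵢ[ℂ] H₁ :=
      ⟨(st8pL V).comp ℓ.subtype, hnorm (st8pL V) (fun z hz => Or.inl rfl)⟩ with hpIso
    set mIso : ℓ →ₗᵢ[ℂ] H₁ :=
      ⟨(st8mL V).comp ℓ.subtype, hnorm (st8mL V) (fun z hz => Or.inr rfl)⟩ with hmIso
    have hPsurj : Function.Surjective pIso := by
      set P : Submodule ℂ H₁ := LinearMap.range pIso.toLinearMap with hP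
      have hPset : (P : Set H₁) = Set.range pIso := by
        rw [hP, LinearMap.coe_range, LinearIsometry.coe_toLinearMap]
      haveI : CompleteSpace P := by
        have : IsClosed (P : Set H₁) := by
          rw [hPset]; exact pIso.isometry.isClosedEmbedding.isClosed_range
        exact this.completeSpace_coe
      have hPbot : Pᗮ = ⊥ := by
        rw [Submodule.eq_bot_iff]
        intro c hc
        have hcP : ∀ z ∈ ℓ, ⟪st8pL V z, c⟫_ℂ = 0 := fun z hz =>
          (Submodule.mem_orthogonal _ _).mp hc _ ⟨⟨z, hz⟩, rfl⟩
        have hwl : st8zvec V c 0 ∈ ℓ := by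
          rw [hmem]
          intro u hu
          rw [st8omega V J hJ, st8pL_zvec, st8mL_zvec]
          rw [inner_eq_zero_symm.mp (hcP u hu)]
          simp
        have := hcP _ hwl
        rw [st8pL_zvec] at this
        exact inner_self_eq_zero.mp this
      have hPtop : P = ⊤ := Submodule.orthogonal_eq_bot_iff.mp hPbot
      intro u
      have hu : u ∈ P := by rw [hPtop]; trivial
      obtain ⟨z, hz⟩ := hu
      exact ⟨z, hz⟩
    have hMsurj : Function.Surjective mIso := by
      set P : Submodule ℂ H₁ := LinearMap.range mIso.toLinearMap with hP
      have hPset : (P : Set H₁) = Set.range mIso := by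
        rw [hP, LinearMap.coe_range, LinearIsometry.coe_toLinearMap]
      haveI : CompleteSpace P := by
        have : IsClosed (P : Set H₁) := by
          rw [hPset]; exact mIso.isometry.isClosedEmbedding.isClosed_range
        exact this.completeSpace_coe
      have hPbot : Pᗮ = ⊥ := by
        rw [Submodule.eq_bot_iff]
        intro c hc
        have hcP : ∀ z ∈ ℓ, ⟪st8mL V z, c⟫_ℂ = 0 := fun z hz =>
          (Submodule.mem_orthogonal _ _).mp hc _ ⟨⟨z, hz⟩, rfl⟩
        have hwl : st8zvec V 0 c ∈ ℓ := by
          rw [hmem]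
          intro u hu
          rw [st8omega V J hJ, st8pL_zvec, st8mL_zvec]
          rw [inner_eq_zero_symm.mp (hcP u hu)]
          simp
        have := hcP _ hwl
        rw [st8mL_zvec] at this
        exact inner_self_eq_zero.mp this
      have hPtop : P = ⊤ := Submodule.orthogonal_eq_bot_iff.mp hPbot
      intro u
      have hu : u ∈ P := by rw [hPtop]; trivial
      obtain ⟨z, hz⟩ := hu
      exact ⟨z, hz⟩
    set eP := LinearIsometryEquiv.ofSurjective pIso hPsurj with heP
    set eM := LinearIsometryEquiv.ofSurjective mIso hMsurj with heM
    set 𝒰 : H₁ ≃ₗᵢ[ℂ] H₁ := eP.symm.trans eM with hUdef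
    have hU : ∀ z, (hz : z ∈ ℓ) → st8mL V z = 𝒰 (st8pL V z) := by
      intro z hz
      have h1 : eP ⟨z, hz⟩ = st8pL V z := rfl
      have : 𝒰 (st8pL V z) = eM (eP.symm (eP ⟨z, hz⟩)) := by rw [h1]; rfl
      rw [this, eP.symm_apply_apply]
      rfl
    have hset : (ℓ : Set (WithLp 2 (H₁ × H₂)))
        = {z : WithLp 2 (H₁ × H₂) | ∃ x : H₁, z = st8gen V 𝒰 x} := by
      ext z
      simp only [SetLike.mem_coe, Set.mem_setOf_eq, st8mem_iff]
      constructor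
      · exact fun hz => hU z hz
      · intro h
        obtain ⟨zz, hzz⟩ := hPsurj (st8pL V z)
        have hzp : st8pL V (zz : WithLp 2 (H₁ × H₂)) = st8pL V z := hzz
        have hzm : st8mL V (zz : WithLp 2 (H₁ × H₂)) = st8mL V z := by
          rw [hU zz zz.2, hzp, ← h]
        have := st8pm_inj V hzp hzm
        rw [← this]
        exact zz.2
    refine ⟨𝒰, hset, ?_⟩
    intro 𝒰' h'
    ext x
    have hx : st8gen V 𝒰' x ∈ ℓ := by
      have : st8gen V 𝒰' x ∈ (ℓ : Set (WithLp 2 (H₁ × H₂))) := by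
        rw [h']; exact ⟨x, rfl⟩
      exact this
    have := hU _ hx
    rw [st8pL_gen, st8mL_gen, map_smul] at this
    exact smul_right_injective H₁ h2I this
  · -- (iii)
    intro 𝒰₁ 𝒰₂
    have hD : ∀ x : H₁, 𝒰₂.symm (𝒰₁ x) = x ↔ 𝒰₁ x = 𝒰₂ x := by
      intro x
      constructor
      · intro h
        have := congrArg 𝒰₂ h
        rwa [𝒰₂.apply_symm_apply] at this
      · intro h
        rw [h, 𝒰₂.symm_apply_apply]
    refine ⟨?_, ?_, ?_⟩
    · intro x hx
      have h12 : 𝒰₁ x = 𝒰₂ x := (hD x).mp hx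
      refine ⟨⟨x, rfl⟩, ⟨x, ?_⟩⟩
      show st8gen V 𝒰₁ x = st8gen V 𝒰₂ x
      rw [st8gen, st8gen, h12]
    · intro x hx y hy hxy
      have : st8pL V (st8gen V 𝒰₁ x) = st8pL V (st8gen V 𝒰₁ y) := congrArg (st8pL V) hxy
      rw [st8pL_gen, st8pL_gen] at this
      exact smul_right_injective H₁ h2I this
    · rintro z ⟨⟨x, rfl⟩, hz₂⟩
      refine ⟨x, ?_, rfl⟩
      have h2 : st8mL V (st8gen V 𝒰₁ x) = 𝒰₂ (st8pL V (st8gen V 𝒰₁ x)) :=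
        (st8mem_iff V 𝒰₂ _).mp hz₂
      rw [st8pL_gen, st8mL_gen, map_smul] at h2
      have h12 : 𝒰₁ x = 𝒰₂ x := smul_right_injective H₁ h2I h2
      exact (hD x).mpr h12
end

section
/- Let (H_b, ω) be a symplectic Hilbert space and let P₁, P₂ : ℝ → B(H_b) be families of bounded idempotent operators (P_k(t)² = P_k(t)) whose ranges are isotropic subspaces for all t, and which are differentiable at a point t* (in operator norm). Then the sesquilinear form b on Ran P₁(t*) ∩ Ran P₂(t*) defined by b(x,y) := ω(x, P₁'(t*)y) - ω(x, P₂'(t*)y) is hermitian: b(x,y) = conj(b(y,x)) for all x, y ∈ Ran P₁(t*) ∩ Ran P₂(t*). -/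
lemma statement14_aux
    {Hb : Type*} [NormedAddCommGroup Hb] [InnerProductSpace ℂ Hb]
    (ω : Hb →L⋆[ℂ] Hb →L[ℂ] ℂ)
    (hskew : ∀ x y : Hb, ω x y = -(starRingEnd ℂ) (ω y x))
    (P : ℝ → (Hb →L[ℂ] Hb))
    (hidem : ∀ t : ℝ, ∀ x : Hb, P t (P t x) = P t x)
    (hiso : ∀ t : ℝ, ∀ x ∈ Set.range (P t), ∀ y ∈ Set.range (P t), ω x y = 0)
    (tstar : ℝ) (P' : Hb →L[ℂ] Hb) (hd : HasDerivAt P P' tstar)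
    {x y : Hb} (hx : x ∈ Set.range (P tstar)) (hy : y ∈ Set.range (P tstar)) :
    ω x (P' y) = (starRingEnd ℂ) (ω y (P' x)) := by
  obtain ⟨z, hz⟩ := hx
  obtain ⟨w, hw⟩ := hy
  have hPx : P tstar x = x := by rw [← hz, hidem]
  have hPy : P tstar y = y := by rw [← hw, hidem]
  have hB : IsBoundedBilinearMap ℝ (fun p : Hb × Hb => ω p.1 p.2) := by
    constructor
    · intro x₁ x₂ y; simp
    · intro c x y
      simp [← Complex.coe_smul, ContinuousLinearMap.map_smulₛₗ, Complex.conj_ofReal]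
    · intro x y₁ y₂; simp
    · intro c x y
      simp [← Complex.coe_smul]
    · refine ⟨‖ω‖ + 1, by positivity, fun x y => ?_⟩
      calc ‖ω x y‖ ≤ ‖ω x‖ * ‖y‖ := (ω x).le_opNorm y
      _ ≤ (‖ω‖ * ‖x‖) * ‖y‖ := by gcongr; exact ω.le_opNorm x
      _ ≤ (‖ω‖ + 1) * ‖x‖ * ‖y‖ := by
          nlinarith [norm_nonneg (ω : Hb →L⋆[ℂ] Hb →L[ℂ] ℂ), norm_nonneg x, norm_nonneg y]
  have h1 : HasDerivAt (fun t => P t x) (P' x) tstar :=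
    (((ContinuousLinearMap.apply ℂ Hb x).restrictScalars ℝ).hasFDerivAt).comp_hasDerivAt tstar hd
  have h2 : HasDerivAt (fun t => P t y) (P' y) tstar :=
    (((ContinuousLinearMap.apply ℂ Hb y).restrictScalars ℝ).hasFDerivAt).comp_hasDerivAt tstar hd
  have hf : HasDerivAt (fun t => ω (P t x) (P t y)) (ω x (P' y) + ω (P' x) y) tstar := by
    have := (hB.hasFDerivAt (P tstar x, P tstar y)).comp_hasDerivAt tstar (h1.prodMk h2)
    simp [hPx, hPy, add_comm] at this
    exact this
  have hzero : (fun t : ℝ => ω (P t x) (P t y)) = fun _ => (0 : ℂ) :=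
    funext fun t => hiso t _ ⟨x, rfl⟩ _ ⟨y, rfl⟩
  have h0 : HasDerivAt (fun t : ℝ => ω (P t x) (P t y)) 0 tstar := by
    rw [hzero]; exact hasDerivAt_const _ _
  have hsum : ω x (P' y) + ω (P' x) y = 0 := hf.unique h0
  linear_combination hsum - hskew (P' x) y

/-- Let `(H_b, ω)` be a symplectic Hilbert space, `P₁, P₂ : ℝ → B(H_b)`
families of bounded idempotents with isotropic ranges, differentiable in operator norm at
`t*`.  Then the sesquilinear form `b(x,y) := ω(x, P₁'(t*) y) - ω(x, P₂'(t*) y)` on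
`Ran P₁(t*) ∩ Ran P₂(t*)` is hermitian: `b(x,y) = conj (b(y,x))`. -/
theorem statement14
    {Hb : Type*} [NormedAddCommGroup Hb] [InnerProductSpace ℂ Hb] [CompleteSpace Hb]
    (ω : Hb →L⋆[ℂ] Hb →L[ℂ] ℂ)
    (hnondeg : ∀ x : Hb, (∀ y : Hb, ω x y = 0) → x = 0)
    (hskew : ∀ x y : Hb, ω x y = -(starRingEnd ℂ) (ω y x))
    (P₁ P₂ : ℝ → (Hb →L[ℂ] Hb))
    (hidem₁ : ∀ t : ℝ, ∀ x : Hb, P₁ t (P₁ t x) = P₁ t x)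
    (hidem₂ : ∀ t : ℝ, ∀ x : Hb, P₂ t (P₂ t x) = P₂ t x)
    (hiso₁ : ∀ t : ℝ, ∀ x ∈ Set.range (P₁ t), ∀ y ∈ Set.range (P₁ t), ω x y = 0)
    (hiso₂ : ∀ t : ℝ, ∀ x ∈ Set.range (P₂ t), ∀ y ∈ Set.range (P₂ t), ω x y = 0)
    (tstar : ℝ) (P₁' P₂' : Hb →L[ℂ] Hb)
    (hd₁ : HasDerivAt P₁ P₁' tstar) (hd₂ : HasDerivAt P₂ P₂' tstar) :
    ∀ x ∈ Set.range (P₁ tstar) ∩ Set.range (P₂ tstar),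
    ∀ y ∈ Set.range (P₁ tstar) ∩ Set.range (P₂ tstar),
      ω x (P₁' y) - ω x (P₂' y) =
        (starRingEnd ℂ) (ω y (P₁' x) - ω y (P₂' x)) := by
  intro x hx y hy
  rw [map_sub,
    statement14_aux ω hskew P₁ hidem₁ hiso₁ tstar P₁' hd₁ hx.1 hy.1,
    statement14_aux ω hskew P₂ hidem₂ hiso₂ tstar P₂' hd₂ hx.2 hy.2]
end

section
/- Let H be a complex Hilbert space, U : ℝ → B(H) a family of unitary operators differentiable in operator norm at t*, and let x_i, x_j : ℝ → H and θ_i, θ_j : ℝ → ℂ be differentiable at t*, satisfying U(t)x_k(t) = θ_k(t)x_k(t) for k ∈ {i,j} and all t in a neighbourhood of t*. Assume θ_i(t*) = θ_j(t*) = 1, ‖x_i(t*)‖ = ‖x_j(t*)‖ = 1, and (if the branches are distinct) ⟨x_i(t*), x_j(t*)⟩ = 0. Then ⟨x_i(t*), U'(t*)x_j(t*)⟩ = δ_{ij} θ_j'(t*) (Hellmann–Feynman identity for unitary families at a crossing through 1). -/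
open scoped InnerProductSpace

/-- (Hellmann–Feynman identity for unitary families at a crossing
through `1`.)  Let `U : ℝ → B(H)` be a family of unitaries differentiable in operator
norm at `t*`, and let eigenbranches `U(t) x_k(t) = θ_k(t) x_k(t)` (`k ∈ {i,j}`) hold near
`t*`, with `θ_i(t*) = θ_j(t*) = 1` and `‖x_i(t*)‖ = ‖x_j(t*)‖ = 1`.  Then
`⟪x_i(t*), U'(t*) x_j(t*)⟫ = δ_{ij} θ_j'(t*)`: it equals `θ_j'(t*)` if the two branches
coincide, and `0` if `⟪x_i(t*), x_j(t*)⟫ = 0`. -/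
theorem statement16
    {H : Type*} [NormedAddCommGroup H] [InnerProductSpace ℂ H] [CompleteSpace H]
    (U : ℝ → (H →L[ℂ] H)) (hU : ∀ t : ℝ, U t ∈ unitary (H →L[ℂ] H))
    (tstar : ℝ) (U' : H →L[ℂ] H) (hdU : HasDerivAt U U' tstar)
    (xi xj : ℝ → H) (θi θj : ℝ → ℂ) (xi' xj' : H) (θi' θj' : ℂ)
    (hxi : HasDerivAt xi xi' tstar) (hxj : HasDerivAt xj xj' tstar)
    (hθi : HasDerivAt θi θi' tstar) (hθj : HasDerivAt θj θj' tstar)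
    (heigi : ∀ᶠ t in nhds tstar, U t (xi t) = θi t • xi t)
    (heigj : ∀ᶠ t in nhds tstar, U t (xj t) = θj t • xj t)
    (hθi1 : θi tstar = 1) (hθj1 : θj tstar = 1)
    (hni : ‖xi tstar‖ = 1) (hnj : ‖xj tstar‖ = 1) :
    ((xi = xj ∧ θi = θj) → ⟪xi tstar, U' (xj tstar)⟫_ℂ = θj') ∧
    (⟪xi tstar, xj tstar⟫_ℂ = 0 → ⟪xi tstar, U' (xj tstar)⟫_ℂ = 0) := by
  have hUi : U tstar (xi tstar) = xi tstar := by
    have h := heigi.self_of_nhds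
    rw [hθi1, one_smul] at h; exact h
  have hdV : HasDerivAt (fun t => (U t).restrictScalars ℝ)
      (U'.restrictScalars ℝ) tstar :=
    (ContinuousLinearMap.restrictScalarsL ℂ H H ℝ ℝ).hasFDerivAt.comp_hasDerivAt tstar hdU
  have h1 : HasDerivAt (fun t => U t (xj t)) (U' (xj tstar) + U tstar xj') tstar :=
    hdV.clm_apply hxj
  have h2 : HasDerivAt (fun t => θj t • xj t) (θj tstar • xj' + θj' • xj tstar) tstar :=
    hθj.smul hxj
  have h3 : HasDerivAt (fun t => U t (xj t)) (θj tstar • xj' + θj' • xj tstar) tstar :=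
    h2.congr_of_eventuallyEq (heigj.mono fun t h => h)
  have hEq : U' (xj tstar) + U tstar xj' = xj' + θj' • xj tstar := by
    have h := h1.unique h3
    rw [hθj1, one_smul] at h; exact h
  have hadj : (ContinuousLinearMap.adjoint (U tstar)) (xi tstar) = xi tstar := by
    rw [← ContinuousLinearMap.star_eq_adjoint]
    conv_lhs => rw [← hUi]
    rw [← ContinuousLinearMap.mul_apply, (Unitary.mem_iff.mp (hU tstar)).1,
      ContinuousLinearMap.one_apply]
  have hinner : ∀ v : H, ⟪xi tstar, U tstar v⟫_ℂ = ⟪xi tstar, v⟫_ℂ := fun v => by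
    rw [← ContinuousLinearMap.adjoint_inner_left, hadj]
  have key : ⟪xi tstar, U' (xj tstar)⟫_ℂ = θj' * ⟪xi tstar, xj tstar⟫_ℂ := by
    have h := congrArg (fun v => ⟪xi tstar, v⟫_ℂ) hEq
    simp only [inner_add_right, inner_smul_right, hinner] at h
    linear_combination h
  constructor
  · rintro ⟨rfl, rfl⟩
    rw [key, inner_self_eq_norm_sq_to_K, hnj]
    norm_num
  · intro h0
    rw [key, h0, mul_zero]
end
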